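/- For integers p, q ≥ 12, the (p × q) column-clique grid has mim-width at least min(p/4, q/3). -/

import Mathlib

open SimpleGraph
open scoped Classical

noncomputable section

/-- The graph `K_t ⊠ S_t`: a clique of size `t` (the `inl` part), an independent set of
size `t` (the `inr` part), joined by a perfect matching. -/
def ktst (t : ℕ) : SimpleGraph (Fin t ⊕ Fin t) :=
  SimpleGraph.fromRel (fun x y =>
    match x, y with
    | Sum.inl i, Sum.inl j => i ≠ j
    | Sum.inl i, Sum.inr j => i = j
    | _, _ => False)

/-- The graph `K_t ⊠ K_t`: two cliques of size `t` joined by a perfect matching. -/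
def ktkt (t : ℕ) : SimpleGraph (Fin t ⊕ Fin t) :=
  SimpleGraph.fromRel (fun x y =>
    match x, y with
    | Sum.inl i, Sum.inl j => i ≠ j
    | Sum.inr i, Sum.inr j => i ≠ j
    | Sum.inl i, Sum.inr j => i = j
    | _, _ => False)

/-- The cycle graph on `ZMod n`. -/
def cycleG (n : ℕ) : SimpleGraph (ZMod n) :=
  SimpleGraph.fromRel (fun x y => y = x + 1)

/-- `σ` enumerates the vertices of `G` as a co-comparability ordering. -/
def IsCoCompOrdering {V : Type} {n : ℕ} (G : SimpleGraph V) (σ : Fin n ≃ V) : Prop :=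
  ∀ i j k : Fin n, i < j → j < k → G.Adj (σ i) (σ k) →
    G.Adj (σ j) (σ i) ∨ G.Adj (σ j) (σ k)

/-- `G` contains `H` as an induced subgraph. -/
def ContainsInducedIso {V W : Type} (G : SimpleGraph V) (H : SimpleGraph W) : Prop :=
  ∃ f : W → V, Function.Injective f ∧ ∀ x y, H.Adj x y ↔ G.Adj (f x) (f y)

/-- A graph is chordal iff it has no induced cycle of length at least 4. -/
def Chordal {V : Type} (G : SimpleGraph V) : Prop :=
  ∀ n, 4 ≤ n → ¬ ContainsInducedIso G (cycleG n)

/-- `G` contains `H` as an induced minor (via an induced minor model). -/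
def HasInducedMinor {V W : Type} (G : SimpleGraph V) (H : SimpleGraph W) : Prop :=
  ∃ S : W → Set V,
    (∀ w, (G.induce (S w)).Connected) ∧
    (∀ w w', w ≠ w' → Disjoint (S w) (S w')) ∧
    (∀ w w', H.Adj w w' → ∃ a ∈ S w, ∃ b ∈ S w', G.Adj a b) ∧
    (∀ w w', w ≠ w' → ¬ H.Adj w w' → ∀ a ∈ S w, ∀ b ∈ S w', ¬ G.Adj a b)

/-- `G` contains `K_t` as a minor (branch sets). -/
def HasCliqueMinor {V : Type} (G : SimpleGraph V) (t : ℕ) : Prop :=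
  ∃ S : Fin t → Set V,
    (∀ i, (G.induce (S i)).Connected) ∧
    (∀ i j, i ≠ j → Disjoint (S i) (S j)) ∧
    (∀ i j, i ≠ j → ∃ a ∈ S i, ∃ b ∈ S j, G.Adj a b)

/-- There is an induced matching of `G` of size `m` between `A` and its complement:
the `2m` matched vertices induce exactly the `m` matching edges in `G`. -/
def IsSimMatching {V : Type} (G : SimpleGraph V) (A : Set V) (m : ℕ) : Prop :=
  ∃ a b : Fin m → V,
    Function.Injective a ∧ Function.Injective b ∧
    (∀ i, a i ∈ A) ∧ (∀ i, b i ∉ A) ∧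
    (∀ i j, G.Adj (a i) (b j) ↔ i = j) ∧
    (∀ i j, ¬ G.Adj (a i) (a j)) ∧
    (∀ i j, ¬ G.Adj (b i) (b j))

/-- There is an induced matching of size `m` in the bipartite graph `G[A, V \ A]`
of edges crossing the cut. -/
def IsMimMatching {V : Type} (G : SimpleGraph V) (A : Set V) (m : ℕ) : Prop :=
  ∃ a b : Fin m → V,
    Function.Injective a ∧ Function.Injective b ∧
    (∀ i, a i ∈ A) ∧ (∀ i, b i ∉ A) ∧
    (∀ i j, G.Adj (a i) (b j) ↔ i = j)

def simval {V : Type} (G : SimpleGraph V) (A : Set V) : ℕ :=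
  sSup {m | IsSimMatching G A m}

def mimval {V : Type} (G : SimpleGraph V) (A : Set V) : ℕ :=
  sSup {m | IsMimMatching G A m}

/-- GF(2)-rank of the `A × Aᶜ` submatrix of the adjacency matrix: the dimension of the
span of the rows of that submatrix (rows extended by zero on columns of `A`). -/
def cutrk {V : Type} [Fintype V] (G : SimpleGraph V) (A : Set V) : ℕ :=
  Module.finrank (ZMod 2) (Submodule.span (ZMod 2)
    {r : V → ZMod 2 | ∃ a ∈ A, r = fun v => if v ∉ A ∧ G.Adj a v then 1 else 0})

/-- A branch-decomposition of a graph on vertex set `V`: a finite subcubic tree together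
with an injection of `V` onto its leaves. -/
structure BranchDecomp (V : Type) [Fintype V] where
  β : Type
  finβ : Fintype β
  T : SimpleGraph β
  connected : T.Connected
  acyclic : T.IsAcyclic
  subcubic : ∀ x : β, (T.neighborSet x).ncard = 1 ∨ (T.neighborSet x).ncard = 3
  L : V → β
  inj : Function.Injective L
  leaves : ∀ x : β, (T.neighborSet x).ncard = 1 ↔ ∃ v, L v = x

/-- The side of the cut induced by the tree edge `xy`, on the side of `x`. -/
def BranchDecomp.cut {V : Type} [Fintype V] (D : BranchDecomp V) (x y : D.β) : Set V :=
  {v | (D.T.deleteEdges {s(x, y)}).Reachable (D.L v) x}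

/-- The `f`-width of a graph on vertex set `V`: minimum over branch-decompositions of the
maximum of `f` over the cuts of the decomposition. -/
def fWidth {V : Type} [Fintype V] (f : Set V → ℕ) : ℕ :=
  sInf {w | ∃ D : BranchDecomp V, ∀ x y, D.T.Adj x y → f (D.cut x y) ≤ w}

def simw {V : Type} [Fintype V] (G : SimpleGraph V) : ℕ := fWidth (simval G)
def mimw {V : Type} [Fintype V] (G : SimpleGraph V) : ℕ := fWidth (mimval G)
def rankw {V : Type} [Fintype V] (G : SimpleGraph V) : ℕ := fWidth (cutrk G)

/-- Contraction of the edge `v₁v₂`: the vertex `v₂` is removed and `v₁` plays the role of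
the contracted vertex `z`, adjacent to all former neighbors of `v₁` or `v₂`. -/
def contractE {V : Type} (G : SimpleGraph V) (v1 v2 : V) : SimpleGraph {v : V // v ≠ v2} :=
  SimpleGraph.fromRel (fun x y =>
    G.Adj x y ∨ ((x : V) = v1 ∧ G.Adj v2 y) ∨ ((y : V) = v1 ∧ G.Adj (x : V) v2))

/-- The `(p × q)` column-clique grid. -/
def ccGrid (p q : ℕ) : SimpleGraph (Fin p × Fin q) :=
  SimpleGraph.fromRel (fun u v =>
    (u.2 = v.2) ∨ (u.1 = v.1 ∧ ((u.2 : ℕ) + 1 = v.2 ∨ (v.2 : ℕ) + 1 = u.2)))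

/-- The `(p × q)` Hsu-clique chain graph. -/
def hsu (p q : ℕ) : SimpleGraph (Fin p × Fin q) :=
  SimpleGraph.fromRel (fun u v =>
    (u.2 = v.2) ∨ ((u.2 : ℕ) + 1 = v.2 ∧ u.1 ≤ v.1))

/-- The `(k × k)` grid graph. -/
def gridG (k : ℕ) : SimpleGraph (Fin k × Fin k) :=
  SimpleGraph.fromRel (fun u v =>
    (u.1 = v.1 ∧ (u.2 : ℕ) + 1 = v.2) ∨ (u.2 = v.2 ∧ (u.1 : ℕ) + 1 = v.1))

/-- A tree-decomposition of `G`. -/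
structure TreeDecomp (V : Type) (G : SimpleGraph V) where
  β : Type
  finβ : Fintype β
  T : SimpleGraph β
  connected : T.Connected
  acyclic : T.IsAcyclic
  B : β → Set V
  coverV : ∀ v : V, ∃ t, v ∈ B t
  coverE : ∀ u v, G.Adj u v → ∃ t, u ∈ B t ∧ v ∈ B t
  coherent : ∀ v : V, (T.induce {t | v ∈ B t}).Connected

/-- Tree-width. -/
def tw {V : Type} (G : SimpleGraph V) : ℕ :=
  sInf {k | ∃ D : TreeDecomp V G, ∀ t, (D.B t).ncard ≤ k + 1}

/-- `G` is `d`-degenerate: every (induced) subgraph has a vertex of degree at most `d`. -/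
def Degenerate {V : Type} (G : SimpleGraph V) (d : ℕ) : Prop :=
  ∀ S : Set V, S.Nonempty → ∃ v ∈ S, {u ∈ S | G.Adj v u}.ncard ≤ d

/-- Every graph on `N` vertices contains a clique of size `k` or an independent set of
size `l`. -/
def ramseyProp (N k l : ℕ) : Prop :=
  ∀ G : SimpleGraph (Fin N),
    (∃ s : Finset (Fin N), G.IsNClique k s) ∨ (∃ s : Finset (Fin N), Gᶜ.IsNClique l s)

/-- The Ramsey number `R(k, l)`. -/
def ramsey (k l : ℕ) : ℕ := sInf {N | ramseyProp N k l}

/-- `G` is a circle graph: the intersection graph of chords of a circle, equivalently the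
overlap graph of a family of intervals with pairwise distinct endpoints. -/
def IsCircleGraph {V : Type} (G : SimpleGraph V) : Prop :=
  ∃ a b : V → ℝ, (∀ v, a v < b v) ∧
    (∀ v w : V, v ≠ w → a v ≠ a w ∧ a v ≠ b w ∧ b v ≠ a w ∧ b v ≠ b w) ∧
    (∀ v w, G.Adj v w ↔
      (a v < a w ∧ a w < b v ∧ b v < b w) ∨ (a w < a v ∧ a v < b w ∧ b w < b v))

/-- Vertex set of the split graph witnessing unbounded mim-width: a clique `Fin m`
together with one independent vertex for each nonempty subset of the clique. -/
abbrev splitV (m : ℕ) := Fin m ⊕ {S : Finset (Fin m) // S.Nonempty}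

/-- The split graph with clique of size `m` and an independent set of size `2^m - 1`
whose vertices have pairwise distinct nonempty neighborhoods in the clique. -/
def splitG (m : ℕ) : SimpleGraph (splitV m) :=
  SimpleGraph.fromRel (fun x y =>
    match x, y with
    | Sum.inl i, Sum.inl j => i ≠ j
    | Sum.inl i, Sum.inr S => i ∈ S.1
    | _, _ => False)

/-!
Every branch-decomposition of a graph on `n ≥ 2` vertices has a tree edge whose cut leaves at
least `n / 3` vertices on each side: starting from a leaf edge, keep stepping into the larger of the
two branches below the current edge while that side holds more than `2n / 3` vertices.

So let `(A, B)` be a cut of the `p × q` column-clique grid with `|A|, |B| ≥ pq / 3` whose largest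
induced matching has size `m`, and suppose `4m < p` and `3m < q`. A column meeting both sides
contains a crossing edge, and such edges in distinct columns of equal parity induce a matching, so
at most `2m` columns are mixed; hence some column lies inside one side, say `A`. Every row that
leaves `A` in another column crosses the cut along a horizontal edge, and these edges again induce
a matching within each parity class of their columns, so each column has at most `2m < p` vertices
in `B`. Then `B` lies in the mixed columns, and `pq ≤ 3|B| ≤ 12m² < (4m + 1)(3m + 1) ≤ pq`.
-/

namespace SimpleGraph

variable {β : Type} {T : SimpleGraph β} {x y z : β}

def side (T : SimpleGraph β) (x y : β) : Set β :=
  {b | (T.deleteEdges {s(x, y)}).Reachable b x}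

theorem side_def' (x y : β) : T.side y x = {b | (T.deleteEdges {s(x, y)}).Reachable b y} := by
  rw [side, Sym2.eq_swap]

theorem reachable_deleteEdges_of_notMem_support {u v a c : β} (w : T.Walk u v)
    (hy : y ∉ w.support) (he : y ∈ s(a, c)) : (T.deleteEdges {s(a, c)}).Reachable u v :=
  reachable_deleteEdges_iff_exists_walk.2 ⟨w, fun h => hy (w.mem_support_of_mem_edges h he)⟩

theorem not_reachable_deleteEdges (hT : T.IsAcyclic) (h : T.Adj x y) :
    ¬ (T.deleteEdges {s(x, y)}).Reachable x y :=
  isBridge_iff.1 (isAcyclic_iff_forall_adj_isBridge.1 hT h)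

theorem Walk.mem_side_or_mem_side (x y : β) : ∀ {b : β}, T.Walk b x →
    b ∈ T.side x y ∨ b ∈ T.side y x
  | _, .nil => Or.inl .rfl
  | b, .cons (v := c) h w => by
    by_cases he : s(b, c) = s(x, y)
    · rcases Sym2.eq_iff.1 he with ⟨rfl, -⟩ | ⟨rfl, -⟩
      · exact Or.inl .rfl
      · exact Or.inr .rfl
    · have hbc : (T.deleteEdges {s(x, y)}).Adj b c := by simp [h, he]
      have := w.mem_side_or_mem_side x y
      rw [side_def' x y] at this ⊢
      exact this.imp hbc.reachable.trans hbc.reachable.trans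

theorem side_swap (hT : T.IsTree) (h : T.Adj x y) : T.side y x = (T.side x y)ᶜ := by
  ext b
  refine ⟨fun hy hx => not_reachable_deleteEdges hT.isAcyclic h (hx.symm.trans ?_), fun hx => ?_⟩
  · rwa [side_def'] at hy
  · obtain ⟨w⟩ := hT.connected.preconnected b x
    exact (w.mem_side_or_mem_side x y).resolve_left hx

theorem side_eq_singleton (h : T.neighborSet y = {x}) : T.side y x = {y} := by
  refine Set.eq_singleton_iff_unique_mem.2 ⟨.rfl, fun b ⟨w⟩ => ?_⟩
  cases w.reverse with
  | nil => rfl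
  | cons hc _ =>
    obtain ⟨hyc, hne⟩ := deleteEdges_adj.1 hc
    rw [← mem_neighborSet, h, Set.mem_singleton_iff] at hyc
    subst hyc
    simp at hne

theorem side_diff_subset : T.side y x \ {y} ⊆ ⋃ z ∈ T.neighborSet y \ {x}, T.side z y := by
  rintro b ⟨hb, hby⟩
  obtain ⟨w, hw⟩ := reachable_deleteEdges_iff_exists_walk.1 hb.symm
  have hp := w.bypass_isPath
  have hwe : s(y, x) ∉ w.bypass.edges := fun h => hw (w.edges_bypass_subset_edges h)
  generalize w.bypass = q at hp hwe
  cases q with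
  | nil => exact absurd rfl hby
  | cons hyc t =>
    rename_i c
    have hcx : c ≠ x := by rintro rfl; simp at hwe
    exact Set.mem_biUnion (x := c) ⟨hyc, hcx⟩
      (reachable_deleteEdges_of_notMem_support t (Walk.cons_isPath_iff _ _ |>.1 hp).2
        (Sym2.mem_mk_right c y)).symm

theorem side_subset_side (hT : T.IsAcyclic) (hyz : T.Adj y z) (hzx : z ≠ x) :
    T.side z y ⊆ T.side y x \ {y} := by
  intro b hb
  have hzy : ¬ (T.deleteEdges {s(z, y)}).Reachable z y := not_reachable_deleteEdges hT hyz.symm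
  refine ⟨?_, fun hby => hzy (by rw [Set.mem_singleton_iff.1 hby] at hb; exact hb.symm)⟩
  obtain ⟨w, hw⟩ := reachable_deleteEdges_iff_exists_walk.1 hb.symm
  have hy : y ∉ w.support := fun hy => hzy <| reachable_deleteEdges_iff_exists_walk.2
    ⟨w.takeUntil y hy, fun h => hw (w.edges_takeUntil_subset_edges hy h)⟩
  have hyz' : (T.deleteEdges {s(y, x)}).Adj y z := by simp [hyz, hzx, hyz.ne.symm]
  exact (hyz'.reachable.trans
    (reachable_deleteEdges_of_notMem_support w hy (Sym2.mem_mk_left y x))).symm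

theorem Preconnected.exists_adj_mem_notMem {V : Type} {G : SimpleGraph V}
    (hG : G.Preconnected) {S : Set V} {u v : V} (hu : u ∈ S) (hv : v ∉ S) :
    ∃ x y, G.Adj x y ∧ x ∈ S ∧ y ∉ S := by
  obtain ⟨w⟩ := hG u v
  obtain ⟨d, -, hd⟩ := w.exists_boundary_dart S hu hv
  exact ⟨_, _, d.adj, hd⟩

/-- The caterpillar with spine the path `Fin (n - 2)` and legs `Fin n`: leg `i` hangs off spine
vertex `min (i - 1) (n - 3)`, so (with `0 - 1 = 0`) each end of the spine carries two legs and
every spine vertex has degree 3. -/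
def caterpillar (n : ℕ) : SimpleGraph (Fin n ⊕ Fin (n - 2)) where
  Adj
    | .inl i, .inr k | .inr k, .inl i => (k : ℕ) = min ((i : ℕ) - 1) (n - 3)
    | .inr k, .inr k' => (pathGraph (n - 2)).Adj k k'
    | .inl _, .inl _ => False
  symm := ⟨by
    rintro (i | k) (j | l) h
    exacts [h, h, h, h.symm]⟩
  loopless := ⟨by
    rintro (i | k) h
    exacts [h, h.ne rfl]⟩

variable {n : ℕ}

@[simp] theorem caterpillar_adj_inl_inl (i j : Fin n) : ¬ (caterpillar n).Adj (.inl i) (.inl j) :=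
  id

@[simp] theorem caterpillar_adj_inl_inr (i : Fin n) (k : Fin (n - 2)) :
    (caterpillar n).Adj (.inl i) (.inr k) ↔ (k : ℕ) = min ((i : ℕ) - 1) (n - 3) := .rfl

@[simp] theorem caterpillar_adj_inr_inl (k : Fin (n - 2)) (i : Fin n) :
    (caterpillar n).Adj (.inr k) (.inl i) ↔ (k : ℕ) = min ((i : ℕ) - 1) (n - 3) := .rfl

@[simp] theorem caterpillar_adj_inr_inr (k l : Fin (n - 2)) :
    (caterpillar n).Adj (.inr k) (.inr l) ↔ (k : ℕ) + 1 = l ∨ (l : ℕ) + 1 = k :=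
  pathGraph_adj

theorem caterpillar_neighborSet_inl (hn : 3 ≤ n) (i : Fin n) :
    (caterpillar n).neighborSet (.inl i) = {.inr ⟨min ((i : ℕ) - 1) (n - 3), by omega⟩} := by
  ext (j | k) <;> simp [Fin.ext_iff]

theorem caterpillar_neighborSet_inr (k : Fin (n - 2)) :
    (caterpillar n).neighborSet (.inr k) =
      {if (k : ℕ) = 0 then .inl ⟨0, by have := k.isLt; omega⟩ else .inr ⟨k - 1, by omega⟩,
        .inl ⟨k + 1, by omega⟩,
        if h : (k : ℕ) = n - 3 then .inl ⟨n - 1, by omega⟩ else .inr ⟨k + 1, by omega⟩} := by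
  have := k.isLt
  ext (j | l) <;> simp only [mem_neighborSet, caterpillar_adj_inr_inl, caterpillar_adj_inr_inr,
    Set.mem_insert_iff, Set.mem_singleton_iff] <;> split_ifs <;> simp [Fin.ext_iff] <;> omega

theorem ncard_neighborSet_caterpillar_inl (hn : 3 ≤ n) (i : Fin n) :
    ((caterpillar n).neighborSet (.inl i)).ncard = 1 := by
  rw [caterpillar_neighborSet_inl hn, Set.ncard_singleton]

theorem ncard_neighborSet_caterpillar_inr (k : Fin (n - 2)) :
    ((caterpillar n).neighborSet (.inr k)).ncard = 3 := by
  have := k.isLt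
  rw [caterpillar_neighborSet_inr, Set.ncard_eq_three]
  refine ⟨_, _, _, ?_, ?_, ?_, rfl⟩ <;> split_ifs <;> simp [Fin.ext_iff] <;> omega

theorem caterpillar_connected (hn : 3 ≤ n) : (caterpillar n).Connected := by
  let spine : pathGraph (n - 2) →g caterpillar n := ⟨Sum.inr, id⟩
  have hspine (k l : Fin (n - 2)) : (caterpillar n).Reachable (.inr k) (.inr l) :=
    (pathGraph_preconnected _ k l).map spine
  have hleg (i : Fin n) : ∃ k, (caterpillar n).Adj (.inl i) (.inr k) :=
    ⟨⟨_, by omega⟩, (caterpillar_adj_inl_inr _ _).2 rfl⟩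
  have hroot (v : Fin n ⊕ Fin (n - 2)) :
      (caterpillar n).Reachable v (.inr ⟨0, by omega⟩) := by
    rcases v with i | k
    · obtain ⟨k, hk⟩ := hleg i
      exact hk.reachable.trans (hspine _ _)
    · exact hspine _ _
  have : Nonempty (Fin n ⊕ Fin (n - 2)) := ⟨.inl ⟨0, by omega⟩⟩
  exact ⟨fun u v => (hroot u).trans (hroot v).symm⟩

theorem caterpillar_isTree (hn : 3 ≤ n) : (caterpillar n).IsTree := by
  refine isTree_iff_connected_and_card.2 ⟨caterpillar_connected hn, ?_⟩
  have hdeg := (caterpillar n).sum_degrees_eq_twice_card_edges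
  simp only [← card_neighborSet_eq_degree, ← Nat.card_eq_fintype_card, Nat.card_coe_set_eq,
    Fintype.sum_sum_type, ncard_neighborSet_caterpillar_inl hn,
    ncard_neighborSet_caterpillar_inr] at hdeg
  simp only [Finset.sum_const, Finset.card_univ, Fintype.card_fin, smul_eq_mul,
    edgeFinset_card] at hdeg
  simp only [Nat.card_eq_fintype_card, Fintype.card_sum, Fintype.card_fin]
  omega

end SimpleGraph

namespace BranchDecomp

variable {V : Type} [Fintype V] (D : BranchDecomp V) {x y : D.β}

theorem isTree : D.T.IsTree := ⟨D.connected, D.acyclic⟩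

theorem cut_eq_preimage_side (x y : D.β) : D.cut x y = D.L ⁻¹' D.T.side x y := rfl

theorem cut_swap (h : D.T.Adj x y) : D.cut y x = (D.cut x y)ᶜ := by
  rw [cut_eq_preimage_side, cut_eq_preimage_side, side_swap D.isTree h, Set.preimage_compl]

theorem ncard_cut_le_one (h : D.T.Adj x y) (hy : (D.T.neighborSet y).ncard = 1) :
    (D.cut y x).ncard ≤ 1 := by
  obtain ⟨a, ha⟩ := Set.ncard_eq_one.1 hy
  have hx : x ∈ D.T.neighborSet y := h.symm
  rw [ha, Set.mem_singleton_iff] at hx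
  subst hx
  rw [cut_eq_preimage_side, side_eq_singleton ha]
  exact Set.ncard_le_one_iff_subsingleton.2 fun u hu v hv => D.inj (hu.trans hv.symm)

theorem cut_subset_union (hy : (D.T.neighborSet y).ncard = 3) {z₁ z₂ : D.β}
    (hN : D.T.neighborSet y \ {x} = {z₁, z₂}) : D.cut y x ⊆ D.cut z₁ y ∪ D.cut z₂ y := by
  intro v hv
  have hLv : D.L v ≠ y := fun h => by have := (D.leaves y).2 ⟨v, h⟩; omega
  have hcover := side_diff_subset ⟨hv, hLv⟩
  simp only [hN, Set.mem_insert_iff, Set.mem_singleton_iff, Set.iUnion_iUnion_eq_or_left,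
    Set.iUnion_iUnion_eq_left, Set.mem_union] at hcover
  exact hcover

theorem ncard_cut_add_ncard_cut (h : D.T.Adj x y) :
    (D.cut x y).ncard + (D.cut y x).ncard = Fintype.card V := by
  rw [D.cut_swap h, Set.ncard_add_ncard_compl, Nat.card_eq_fintype_card]

def IsBalancedEdge (x y : D.β) : Prop :=
  D.T.Adj x y ∧ Fintype.card V ≤ 3 * (D.cut x y).ncard ∧ Fintype.card V ≤ 3 * (D.cut y x).ncard

theorem exists_isBalancedEdge_of_three_mul_lt (hV : 2 ≤ Fintype.card V) (h : D.T.Adj x y)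
    (hxy : 3 * (D.cut x y).ncard < Fintype.card V) : ∃ x y, D.IsBalancedEdge x y := by
  let _ := D.finβ
  induction hk : (D.T.side y x).ncard using Nat.strong_induction_on generalizing x y with
  | _ k ih =>
  have hsum := D.ncard_cut_add_ncard_cut h
  rcases D.subcubic y with hy | hy
  · have := D.ncard_cut_le_one h hy
    omega
  obtain ⟨z₁, z₂, -, hN⟩ := Set.ncard_eq_two.1 <| by
    rw [Set.ncard_sdiff_singleton_of_mem (show x ∈ D.T.neighborSet y from h.symm), hy]
  have hcover : (D.cut y x).ncard ≤ (D.cut z₁ y).ncard + (D.cut z₂ y).ncard :=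
    (Set.ncard_le_ncard (D.cut_subset_union hy hN)).trans (Set.ncard_union_le _ _)
  obtain ⟨z, hz, hzy⟩ :
      ∃ z ∈ D.T.neighborSet y \ {x}, (D.cut y x).ncard ≤ 2 * (D.cut z y).ncard := by
    rcases le_total (D.cut z₁ y).ncard (D.cut z₂ y).ncard with h₁₂ | h₂₁
    · exact ⟨z₂, by simp [hN], by omega⟩
    · exact ⟨z₁, by simp [hN], by omega⟩
  obtain ⟨hyz, hzx⟩ : D.T.Adj y z ∧ z ≠ x := hz
  by_cases hyz_small : 3 * (D.cut y z).ncard < Fintype.card V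
  · refine ih _ ?_ hyz hyz_small rfl
    rw [← hk]
    exact Set.ncard_lt_ncard ((side_subset_side D.acyclic hyz hzx).trans_ssubset
      (Set.sdiff_singleton_ssubset.2 .rfl))
  · exact ⟨z, y, hyz.symm, by omega, by omega⟩

theorem exists_isBalancedEdge (hV : 2 ≤ Fintype.card V) : ∃ x y, D.IsBalancedEdge x y := by
  obtain ⟨v⟩ : Nonempty V := Fintype.card_pos_iff.1 (by omega)
  obtain ⟨y, hN⟩ := Set.ncard_eq_one.1 ((D.leaves (D.L v)).2 ⟨v, rfl⟩)
  have h : D.T.Adj (D.L v) y := by simp [← mem_neighborSet, hN]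
  by_cases hleft : 3 * (D.cut (D.L v) y).ncard < Fintype.card V
  · exact D.exists_isBalancedEdge_of_three_mul_lt hV h hleft
  by_cases hright : 3 * (D.cut y (D.L v)).ncard < Fintype.card V
  · exact D.exists_isBalancedEdge_of_three_mul_lt hV h.symm hright
  exact ⟨D.L v, y, h, by omega, by omega⟩

theorem nonempty_of_three_le_card (hV : 3 ≤ Fintype.card V) : Nonempty (BranchDecomp V) := by
  set n := Fintype.card V
  have leg_or_spine : ∀ v : Fin n ⊕ Fin (n - 2),
      ((caterpillar n).neighborSet v).ncard = 1 ∧ (∃ u, Sum.inl (Fintype.equivFin V u) = v) ∨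
        ((caterpillar n).neighborSet v).ncard = 3 ∧ ¬ ∃ u, Sum.inl (Fintype.equivFin V u) = v := by
    rintro (i | k)
    · exact .inl ⟨ncard_neighborSet_caterpillar_inl hV i, _,
        congrArg _ (Equiv.apply_symm_apply _ i)⟩
    · exact .inr ⟨ncard_neighborSet_caterpillar_inr k, by simp⟩
  exact ⟨{
    β := Fin n ⊕ Fin (n - 2)
    finβ := inferInstance
    T := caterpillar n
    connected := (caterpillar_isTree hV).connected
    acyclic := (caterpillar_isTree hV).isAcyclic
    subcubic := fun v => (leg_or_spine v).imp And.left And.left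
    L := Sum.inl ∘ Fintype.equivFin V
    inj := Sum.inl_injective.comp (Fintype.equivFin V).injective
    leaves := fun v => by rcases leg_or_spine v with h | h <;> simp [h] }⟩

/-- Without `D₀` the infimum defining `fWidth f` could be `sInf ∅ = 0`. -/
theorem exists_forall_le_fWidth (f : Set V → ℕ) (D₀ : BranchDecomp V) :
    ∃ D : BranchDecomp V, ∀ x y, D.T.Adj x y → f (D.cut x y) ≤ fWidth f := by
  let _ := D₀.finβ
  let width (e : D₀.β × D₀.β) := f (D₀.cut e.1 e.2)
  exact Nat.sInf_mem (s := {w | ∃ D : BranchDecomp V, ∀ x y, D.T.Adj x y → f (D.cut x y) ≤ w})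
    ⟨Finset.univ.sup width, D₀, fun x y _ => Finset.le_sup (f := width) (Finset.mem_univ (x, y))⟩

end BranchDecomp

section InducedMatching

variable {V ι : Type} {G : SimpleGraph V} {A : Set V} {m : ℕ}

theorem IsMimMatching.compl (h : IsMimMatching G A m) : IsMimMatching G Aᶜ m := by
  obtain ⟨a, b, ha, hb, haA, hbA, hab⟩ := h
  exact ⟨b, a, hb, ha, hbA, fun i => not_not.2 (haA i),
    fun i j => by rw [G.adj_comm, hab, eq_comm]⟩

theorem mimval_compl : mimval G Aᶜ = mimval G A := by
  unfold mimval
  congr 1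
  ext m
  exact ⟨fun h => compl_compl A ▸ h.compl, IsMimMatching.compl⟩

theorem IsMimMatching.le_mimval [Finite V] (h : IsMimMatching G A m) : m ≤ mimval G A := by
  refine le_csSup ⟨Nat.card V, ?_⟩ h
  rintro k ⟨a, -, ha, -⟩
  simpa using Nat.card_le_card_of_injective a ha

theorem isMimMatching_of_finset (s : Finset ι) (a b : ι → V) (ha : ∀ i ∈ s, a i ∈ A)
    (hb : ∀ i ∈ s, b i ∉ A) (hab : ∀ i ∈ s, ∀ j ∈ s, G.Adj (a i) (b j) ↔ i = j) :
    IsMimMatching G A s.card := by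
  let e := s.equivFin.symm
  have hab' (k l : Fin s.card) : G.Adj (a (e k)) (b (e l)) ↔ k = l :=
    (hab _ (e k).2 _ (e l).2).trans (Subtype.val_injective.eq_iff.trans e.injective.eq_iff)
  refine ⟨fun k => a (e k), fun k => b (e k), fun k l h => ?_, fun k l h => ?_,
    fun k => ha _ (e k).2, fun k => hb _ (e k).2, hab'⟩
  · refine ((hab' l k).1 ?_).symm
    simpa only [← h] using (hab' k k).2 rfl
  · refine (hab' k l).1 ?_
    simpa only [← h] using (hab' k k).2 rfl

theorem card_le_two_mul_mimval [Finite V] (s : Finset ι) (f : ι → ℕ) (a b : ι → V)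
    (ha : ∀ i ∈ s, a i ∈ A) (hb : ∀ i ∈ s, b i ∉ A) (hadj : ∀ i ∈ s, G.Adj (a i) (b i))
    (hnadj : ∀ i ∈ s, ∀ j ∈ s, i ≠ j → f i % 2 = f j % 2 → ¬ G.Adj (a i) (b j)) :
    s.card ≤ 2 * mimval G A := by
  have hclass (r : ℕ) : (s.filter fun i => f i % 2 = r).card ≤ mimval G A := by
    refine (isMimMatching_of_finset _ a b (fun i hi => ha i (Finset.mem_filter.1 hi).1)
      (fun i hi => hb i (Finset.mem_filter.1 hi).1) fun i hi j hj => ?_).le_mimval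
    rw [Finset.mem_filter] at hi hj
    refine ⟨fun h => by_contra fun hij => hnadj i hi.1 j hj.1 hij (hi.2.trans hj.2.symm) h, ?_⟩
    rintro rfl
    exact hadj i hi.1
  have hsplit := s.card_filter_add_card_filter_not fun i => f i % 2 = 0
  rw [Finset.filter_congr fun i _ => show ¬ f i % 2 = 0 ↔ f i % 2 = 1 by omega] at hsplit
  have := hclass 0
  have := hclass 1
  omega

end InducedMatching

section ColumnCliqueGrid

variable {p q : ℕ} {A : Set (Fin p × Fin q)}

theorem ccGrid_adj {u v : Fin p × Fin q} :
    (ccGrid p q).Adj u v ↔ u ≠ v ∧ (u.2 = v.2 ∨ u.1 = v.1 ∧ (pathGraph q).Adj u.2 v.2) := by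
  rw [ccGrid, fromRel_adj, pathGraph_adj]
  grind

theorem card_le_two_mul_mimval_of_mixed (s : Finset (Fin q))
    (hs : ∀ j ∈ s, (∃ i, (i, j) ∈ A) ∧ ∃ i, (i, j) ∉ A) :
    s.card ≤ 2 * mimval (ccGrid p q) A := by
  choose rA hrA using fun j : s => (hs j j.2).1
  choose rB hrB using fun j : s => (hs j j.2).2
  have := card_le_two_mul_mimval (G := ccGrid p q) Finset.univ (fun j : s => (j : ℕ))
    (fun j => (rA j, j)) (fun j => (rB j, j)) (fun j _ => hrA j) (fun j _ => hrB j)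
    (fun j _ => ccGrid_adj.2 ⟨fun h => hrB j (h ▸ hrA j), .inl rfl⟩)
    (fun j _ k _ hjk hpar h => ?_)
  · simpa using this
  · rw [ccGrid_adj, pathGraph_adj] at h
    have : (j : Fin q) ≠ k := fun h' => hjk (Subtype.ext h')
    have : (j : ℕ) ≠ k := fun h' => this (Fin.ext h')
    simp only at h
    omega

theorem card_le_two_mul_mimval_of_column_subset {j₁ : Fin q} (hj₁ : ∀ i, (i, j₁) ∈ A)
    (j₀ : Fin q) : (Finset.univ.filter fun i => (i, j₀) ∉ A).card ≤ 2 * mimval (ccGrid p q) A := by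
  have hflip (i : Finset.univ.filter fun i => (i, j₀) ∉ A) :
      ∃ c c', (pathGraph q).Adj c c' ∧ ((i : Fin p), c) ∈ A ∧ ((i : Fin p), c') ∉ A :=
    (pathGraph_preconnected q).exists_adj_mem_notMem (S := {j | ((i : Fin p), j) ∈ A}) (hj₁ i)
      (Finset.mem_filter.1 i.2).2
  choose c c' hcc' hc hc' using hflip
  have := card_le_two_mul_mimval (G := ccGrid p q) Finset.univ (fun i => (c i : ℕ))
    (fun i => ((i : Fin p), c i)) (fun i => ((i : Fin p), c' i)) (fun i _ => hc i)
    (fun i _ => hc' i) (fun i _ => ccGrid_adj.2 ⟨fun h => (hcc' i).ne (congrArg Prod.snd h),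
      .inr ⟨rfl, hcc' i⟩⟩) (fun i _ k _ hik hpar h => ?_)
  · simpa using this
  · have hk := pathGraph_adj.1 (hcc' k)
    have : (i : Fin p) ≠ k := fun h' => hik (Subtype.ext h')
    rw [ccGrid_adj] at h
    simp only [this, false_and, or_false] at h
    have := congrArg Fin.val h.2
    omega

theorem ncard_compl_le_of_column_subset {j₁ : Fin q} (hj₁ : ∀ i, (i, j₁) ∈ A)
    (hp : 2 * mimval (ccGrid p q) A < p) :
    Aᶜ.ncard ≤ 2 * mimval (ccGrid p q) A * (2 * mimval (ccGrid p q) A) := by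
  set m := mimval (ccGrid p q) A
  have hfibre (j : Fin q) (_ : j ∈ Aᶜ.toFinset.image Prod.snd) :
      (Aᶜ.toFinset.filter fun u => u.2 = j).card ≤ 2 * m := by
    refine (Finset.card_le_card_of_injOn Prod.fst (fun u hu => ?_) fun u hu v hv h => ?_).trans
      (card_le_two_mul_mimval_of_column_subset hj₁ j)
    · simp only [Finset.coe_filter, Set.mem_toFinset, Set.mem_compl_iff] at hu
      simpa [← hu.2] using hu.1
    · simp only [Finset.coe_filter] at hu hv
      exact Prod.ext h (hu.2.trans hv.2.symm)
  have hmixed (j : Fin q) (hj : j ∈ Aᶜ.toFinset.image Prod.snd) :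
      (∃ i, (i, j) ∈ A) ∧ ∃ i, (i, j) ∉ A := by
    obtain ⟨u, hu, rfl⟩ := Finset.mem_image.1 hj
    refine ⟨by_contra fun h => ?_, u.1, by simpa using hu⟩
    push Not at h
    have := card_le_two_mul_mimval_of_column_subset hj₁ u.2
    rw [Finset.filter_true_of_mem fun i _ => h i, Finset.card_univ, Fintype.card_fin] at this
    omega
  rw [Set.ncard_eq_toFinset_card']
  calc _ ≤ 2 * m * (Aᶜ.toFinset.image Prod.snd).card := Finset.card_le_mul_card_image _ _ hfibre
    _ ≤ 2 * m * (2 * m) := Nat.mul_le_mul_left _ (card_le_two_mul_mimval_of_mixed _ hmixed)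

theorem min_le_mimval_of_balanced (hA : p * q ≤ 3 * A.ncard) (hAc : p * q ≤ 3 * Aᶜ.ncard) :
    min ((p : ℝ) / 4) ((q : ℝ) / 3) ≤ mimval (ccGrid p q) A := by
  set m := mimval (ccGrid p q) A
  by_contra! h
  rw [lt_min_iff] at h
  have hmp : 4 * m < p := by exact_mod_cast (by linarith [h.1] : (4 * m : ℝ) < p)
  have hmq : 3 * m < q := by exact_mod_cast (by linarith [h.2] : (3 * m : ℝ) < q)
  have hpq : (4 * m + 1) * (3 * m + 1) ≤ p * q := Nat.mul_le_mul hmp hmq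
  have small_side (B : Set (Fin p × Fin q)) (hB : mimval (ccGrid p q) B = m) (j : Fin q)
      (hj : ∀ i, (i, j) ∈ B) (hBc : p * q ≤ 3 * Bᶜ.ncard) : False := by
    have := ncard_compl_le_of_column_subset hj (by omega)
    rw [hB] at this
    nlinarith
  by_cases hfull : ∃ j : Fin q, (∀ i, (i, j) ∈ A) ∨ ∀ i, (i, j) ∉ A
  · obtain ⟨j, hj | hj⟩ := hfull
    · exact small_side A rfl j hj hAc
    · exact small_side Aᶜ mimval_compl j hj (by rwa [compl_compl])
  · push Not at hfull
    have := card_le_two_mul_mimval_of_mixed (A := A) Finset.univ fun j _ => (hfull j).symm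
    rw [Finset.card_univ, Fintype.card_fin] at this
    omega

end ColumnCliqueGrid

/-- for `p, q ≥ 12`, the `(p × q)` column-clique grid has mim-width at
least `min(p/4, q/3)`. -/
theorem stmt8 (p q : ℕ) (hp : 12 ≤ p) (hq : 12 ≤ q) :
    min ((p : ℝ) / 4) ((q : ℝ) / 3) ≤ (mimw (ccGrid p q) : ℝ) := by
  have hcard : Fintype.card (Fin p × Fin q) = p * q := by simp
  have hpq : 144 ≤ p * q := Nat.mul_le_mul hp hq
  obtain ⟨D₀⟩ := BranchDecomp.nonempty_of_three_le_card (V := Fin p × Fin q) (by omega)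
  obtain ⟨D, hD⟩ := BranchDecomp.exists_forall_le_fWidth (mimval (ccGrid p q)) D₀
  obtain ⟨x, y, hxy, hA, hAc⟩ := D.exists_isBalancedEdge (by omega)
  rw [D.cut_swap hxy, hcard] at hAc
  rw [hcard] at hA
  calc _ ≤ (mimval (ccGrid p q) (D.cut x y) : ℝ) := min_le_mimval_of_balanced hA hAc
    _ ≤ mimw (ccGrid p q) := by exact_mod_cast hD x y hxy
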